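/- arXiv:0712.2853 — 2 statements merged into one kernel-verified Lean document; each statement's English description precedes it below -/
import Mathlib

section
/- (Dehn twist axiom.) Let (g₁, g₂; h₁, h₂) be a standard-block datum of size 2 over G, so that g₂ = g₁⁻¹. Then ζ(β₁(g, h)) = φ_{g₁}(β₁(ζ(g, h))), and both sides equal the datum (g₁, g₁⁻¹; h₁, h₂ g₁⁻¹). -/
/-- A standard-block datum of size `n` over `G`: the ordered product of the `g`-tuple is `1`. -/
def IsBlock {G : Type*} [Group G] {n : ℕ} (g : Fin n → G) : Prop :=
  (List.ofFn g).prod = 1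

/-- The Z-move `ζ` on a tuple: `(g₁, …, g_n) ↦ (g_n, g₁, …, g_{n-1})`
(cyclic right shift, in terms of the rotation `i ↦ i + 1` of `Fin n`). -/
def zmove {G : Type*} [Group G] {n : ℕ} (g : Fin n → G) : Fin n → G :=
  fun i => g ((finRotate n).symm i)

/-- The braiding move `β` at (0-based) positions `i`, `i+1`: replaces `(gᵢ, gᵢ₊₁)` with
`(gᵢ * gᵢ₊₁ * gᵢ⁻¹, gᵢ)` and `(hᵢ, hᵢ₊₁)` with `(hᵢ₊₁ * gᵢ⁻¹, hᵢ)`, leaving all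
other entries unchanged. -/
def bmove {G : Type*} [Group G] {n : ℕ} (i : ℕ) (hi : i + 1 < n) (g h : Fin n → G) :
    (Fin n → G) × (Fin n → G) :=
  let i0 : Fin n := ⟨i, Nat.lt_of_succ_lt hi⟩
  let i1 : Fin n := ⟨i + 1, hi⟩
  (Function.update (Function.update g i0 (g i0 * g i1 * (g i0)⁻¹)) i1 (g i0),
   Function.update (Function.update h i0 (h i1 * (g i0)⁻¹)) i1 (h i0))

/-- The P-move `φ_x`, sending `(g, h)` to `(i ↦ x * gᵢ * x⁻¹, i ↦ hᵢ * x⁻¹)`. -/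
def pmove {G : Type*} [Group G] {n : ℕ} (x : G) (gh : (Fin n → G) × (Fin n → G)) :
    (Fin n → G) × (Fin n → G) :=
  (fun i => x * gh.1 i * x⁻¹, fun i => gh.2 i * x⁻¹)

section FinTwo

variable {G : Type*} [Group G]

theorem isBlock_fin_two_iff {g : Fin 2 → G} : IsBlock g ↔ g 0 * g 1 = 1 := by
  simp [IsBlock]

theorem zmove_fin_two (g : Fin 2 → G) : zmove g = ![g 1, g 0] := by
  ext i
  fin_cases i <;> rfl

theorem bmove_zero_fin_two (hi : 0 + 1 < 2) (g h : Fin 2 → G) :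
    bmove 0 hi g h = (![g 0 * g 1 * (g 0)⁻¹, g 0], ![h 1 * (g 0)⁻¹, h 0]) := by
  ext i <;> fin_cases i <;> rfl

theorem pmove_fin_two (x a b c d : G) :
    pmove x (![a, b], ![c, d]) = (![x * a * x⁻¹, x * b * x⁻¹], ![c * x⁻¹, d * x⁻¹]) := by
  ext i <;> fin_cases i <;> rfl

end FinTwo

/-- Dehn twist axiom: for a standard-block datum `(g₁, g₂; h₁, h₂)` of size 2 (so that
`g₂ = g₁⁻¹`), one has `ζ(β₁(g, h)) = φ_{g₁}(β₁(ζ(g, h)))`, and both sides equal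
`(g₁, g₁⁻¹; h₁, h₂g₁⁻¹)`. -/
theorem dehn_twist_axiom {G : Type*} [Group G] (g h : Fin 2 → G) (hg : IsBlock g) :
    g 1 = (g 0)⁻¹
    ∧ (zmove (bmove 0 (by norm_num) g h).1, zmove (bmove 0 (by norm_num) g h).2)
        = pmove (g 0)
            (bmove 0 (by norm_num) (zmove g) (zmove h))
    ∧ (zmove (bmove 0 (by norm_num) g h).1, zmove (bmove 0 (by norm_num) g h).2)
        = (![g 0, (g 0)⁻¹], ![h 0, h 1 * (g 0)⁻¹]) := by
  have hg1 : g 1 = (g 0)⁻¹ := eq_inv_of_mul_eq_one_right (isBlock_fin_two_iff.mp hg)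
  have twist : (zmove (bmove 0 (by norm_num) g h).1, zmove (bmove 0 (by norm_num) g h).2)
      = (![g 0, (g 0)⁻¹], ![h 0, h 1 * (g 0)⁻¹]) := by
    simp [bmove_zero_fin_two, zmove_fin_two, hg1]
  have conj_twist : pmove (g 0) (bmove 0 (by norm_num) (zmove g) (zmove h))
      = (![g 0, (g 0)⁻¹], ![h 0, h 1 * (g 0)⁻¹]) := by
    simp [bmove_zero_fin_two, zmove_fin_two, pmove_fin_two, hg1, mul_assoc]
  exact ⟨hg1, twist.trans conj_twist.symm, twist⟩
end

section
/- (Symmetry of the F-move.) Let (g, h) of size k+1 and (g', h') of size l+1 be glueable standard-block data over G. Then the data ζ⁻¹(g', h') = (g'₂, …, g'_{l+1}, g'₁; h'₂, …, h'_{l+1}, h'₁) and ζ(g, h) = (g_{k+1}, g₁, …, g_k; h_{k+1}, h₁, …, h_k) are glueable, and applying the Z-move l times to the F-concatenation of (g, h) and (g', h') equals the F-concatenation of ζ⁻¹(g', h') and ζ(g, h); concretely, both equal (g'₂, …, g'_{l+1}, g₁, …, g_k; h'₂, …, h'_{l+1}, h₁, …, h_k). -/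
/-- The inverse Z-move `ζ⁻¹` on a tuple: `(g₁, …, g_n) ↦ (g₂, …, g_n, g₁)`
(cyclic left shift). -/
def zinv {G : Type*} [Group G] {n : ℕ} (g : Fin n → G) : Fin n → G :=
  fun i => g (finRotate n i)

/-- The F-concatenation of a tuple of size `k+1` with a tuple of size `l+1`:
`(A₁, …, A_k, B₂, …, B_{l+1})` of size `k+l`. -/
def fcg {G : Type*} [Group G] {k l : ℕ} (A : Fin (k + 1) → G) (B : Fin (l + 1) → G) :
    Fin (k + l) → G :=
  Fin.append (Fin.init A) (Fin.tail B)

/-!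
Applying `ζ` to a concatenation `u ++ v` moves the last entry of `v` to the front, so after
`|v|` moves the two blocks have swapped: `ζ^[|v|] (u ++ v) = v ++ u`. The F-concatenation of
`(g, h)` and `(g', h')` is `init g ++ tail g'`, and `ζ⁻¹` resp. `ζ` exactly turn `g'` into a
tuple with initial part `tail g'` and `g` into one with tail `init g`. Glueability of the
swapped pair is the relation `ab = 1 → ba = 1` in a group.
-/

section

variable {G : Type*} [Group G]

lemma zmove_snoc {n : ℕ} (w : Fin n → G) (x : G) : zmove (Fin.snoc w x) = Fin.cons x w := by
  funext i
  simp [zmove, Fin.snoc_eq_cons_rotate]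

lemma zmove_iterate_comp_cast {m n : ℕ} (b : ℕ) (e : m = n) (f : Fin n → G) :
    zmove^[b] (f ∘ Fin.cast e) = zmove^[b] f ∘ Fin.cast e := by
  subst e
  rfl

lemma zmove_append_snoc {a b : ℕ} (u : Fin a → G) (v : Fin b → G) (x : G) :
    zmove (Fin.append u (Fin.snoc v x)) =
      Fin.append (Fin.cons x u) v ∘ Fin.cast (Nat.add_right_comm a 1 b).symm := by
  rw [Fin.append_snoc, zmove_snoc, Fin.append_cons]
  funext i
  simp

theorem zmove_iterate_append {a b : ℕ} (u : Fin a → G) (v : Fin b → G) :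
    zmove^[b] (Fin.append u v) = Fin.append v u ∘ Fin.cast (Nat.add_comm a b) := by
  induction b generalizing a with
  | zero =>
    obtain rfl : v = Fin.elim0 := funext fun i => i.elim0
    simp only [Function.iterate_zero, id_eq, Fin.append_elim0, Fin.elim0_append]
    rfl
  | succ b ih =>
    rw [Function.iterate_succ_apply, ← Fin.snoc_init_self v, zmove_append_snoc,
      zmove_iterate_comp_cast, ih, Fin.append_right_cons]
    rfl

lemma zmove_apply_zero {n : ℕ} (f : Fin (n + 1) → G) : zmove f 0 = f (Fin.last n) := by
  rw [zmove, (finRotate _).symm_apply_eq.mpr finRotate_last.symm]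

lemma zinv_apply_last {n : ℕ} (f : Fin (n + 1) → G) : zinv f (Fin.last n) = f 0 := by
  rw [zinv, finRotate_last]

lemma init_zinv {n : ℕ} (f : Fin (n + 1) → G) : Fin.init (zinv f) = Fin.tail f := by
  funext i
  simp [Fin.init, Fin.tail, zinv, finRotate_apply]

lemma tail_zmove {n : ℕ} (f : Fin (n + 1) → G) : Fin.tail (zmove f) = Fin.init f := by
  funext i
  simp only [Fin.init, Fin.tail, zmove]
  rw [(finRotate _).symm_apply_eq.mpr (by rw [finRotate_apply, Fin.coeSucc_eq_succ])]

theorem fcg_zinv_zmove {k l : ℕ} (A : Fin (k + 1) → G) (B : Fin (l + 1) → G) :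
    fcg (zinv B) (zmove A) = Fin.append (Fin.tail B) (Fin.init A) := by
  rw [fcg, init_zinv, tail_zmove]

theorem zmove_iterate_fcg {k l : ℕ} (A : Fin (k + 1) → G) (B : Fin (l + 1) → G) :
    zmove^[l] (fcg A B) = fcg (zinv B) (zmove A) ∘ Fin.cast (Nat.add_comm k l) := by
  rw [fcg, zmove_iterate_append, fcg_zinv_zmove]

end

theorem f_move_symmetry_general {G : Type*} [Group G] (k l : ℕ)
    (g h : Fin (k + 1) → G) (g' h' : Fin (l + 1) → G)
    (hglue1 : g (Fin.last k) * g' 0 = 1) (hglue2 : h (Fin.last k) = h' 0) :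
    zinv g' (Fin.last l) * zmove g 0 = 1
    ∧ zinv h' (Fin.last l) = zmove h 0
    ∧ zmove^[l] (fcg g g') = fcg (zinv g') (zmove g) ∘ Fin.cast (Nat.add_comm k l)
    ∧ zmove^[l] (fcg h h') = fcg (zinv h') (zmove h) ∘ Fin.cast (Nat.add_comm k l)
    ∧ fcg (zinv g') (zmove g) = Fin.append (Fin.tail g') (Fin.init g)
    ∧ fcg (zinv h') (zmove h) = Fin.append (Fin.tail h') (Fin.init h) := by
  rw [zinv_apply_last, zinv_apply_last, zmove_apply_zero, zmove_apply_zero]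
  exact ⟨mul_eq_one_comm.mp hglue1, hglue2.symm, zmove_iterate_fcg g g', zmove_iterate_fcg h h',
    fcg_zinv_zmove g g', fcg_zinv_zmove h h'⟩

/-- Symmetry of the F-move: if `(g, h)` of size `k+1` and `(g', h')` of size `l+1` are
glueable, then `ζ⁻¹(g', h')` and `ζ(g, h)` are glueable, and applying the Z-move `l` times
to the F-concatenation of `(g, h)` and `(g', h')` equals (up to the canonical
identification `Fin (k+l) ≃ Fin (l+k)`) the F-concatenation of `ζ⁻¹(g', h')` and
`ζ(g, h)`; concretely both equal `(g'₂, …, g'_{l+1}, g₁, …, g_k)`. -/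
theorem f_move_symmetry {G : Type*} [Group G] (k l : ℕ)
    (g h : Fin (k + 1) → G) (g' h' : Fin (l + 1) → G)
    (hg : IsBlock g) (hg' : IsBlock g')
    (hglue1 : g (Fin.last k) * g' 0 = 1) (hglue2 : h (Fin.last k) = h' 0) :
    zinv g' (Fin.last l) * zmove g 0 = 1
    ∧ zinv h' (Fin.last l) = zmove h 0
    ∧ zmove^[l] (fcg g g') = fcg (zinv g') (zmove g) ∘ Fin.cast (Nat.add_comm k l)
    ∧ zmove^[l] (fcg h h') = fcg (zinv h') (zmove h) ∘ Fin.cast (Nat.add_comm k l)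
    ∧ fcg (zinv g') (zmove g) = Fin.append (Fin.tail g') (Fin.init g)
    ∧ fcg (zinv h') (zmove h) = Fin.append (Fin.tail h') (Fin.init h) :=
  f_move_symmetry_general k l g h g' h' hglue1 hglue2
end
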